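/- Let k be a positive integer. If γ⁻¹(G) ≤ α(G) holds for every finite simple graph G without isolated vertices having γ(G) = k, then γ⁻¹(G) ≤ α(G) holds for every finite simple graph G without isolated vertices having γ(G) ≤ k. -/

import Mathlib

/-- `D` is a dominating set of `G`: every vertex lies in `D` or has a neighbor in `D`. -/
def IsDomSet {V : Type*} (G : SimpleGraph V) (D : Set V) : Prop :=
  ∀ v : V, v ∈ D ∨ ∃ u ∈ D, G.Adj u v

/-- `S` is an independent set of `G`. -/
def IsIndep {V : Type*} (G : SimpleGraph V) (S : Set V) : Prop :=
  S.Pairwise fun u v => ¬ G.Adj u v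

/-- The domination number of `G`: the minimum size of a dominating set. -/
noncomputable def gamma {V : Type*} (G : SimpleGraph V) : ℕ :=
  sInf {n | ∃ D : Set V, IsDomSet G D ∧ D.ncard = n}

/-- The independence number of `G`: the maximum size of an independent set. -/
noncomputable def alpha {V : Type*} (G : SimpleGraph V) : ℕ :=
  sSup {n | ∃ S : Set V, IsIndep G S ∧ S.ncard = n}

/-- The inverse domination number of `G`: the minimum size of a dominating set
disjoint from some minimum dominating set. -/
noncomputable def invGamma {V : Type*} (G : SimpleGraph V) : ℕ :=
  sInf {n | ∃ D T : Set V, IsDomSet G D ∧ D.ncard = gamma G ∧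
    IsDomSet G T ∧ D ∩ T = ∅ ∧ T.ncard = n}

/-- The independence number of the subgraph of `G` induced by `D`. -/
noncomputable def alphaOn {V : Type*} (G : SimpleGraph V) (D : Set V) : ℕ :=
  sSup {n | ∃ S : Set V, S ⊆ D ∧ IsIndep G S ∧ S.ncard = n}

/-- The number of edges of the subgraph of `G` induced by `D`. -/
noncomputable def edgeCountOn {V : Type*} (G : SimpleGraph V) (D : Set V) : ℕ :=
  {e ∈ G.edgeSet | ∀ v ∈ e, v ∈ D}.ncard

/-- `D` is an optimal dominating set: of minimum size; among those, `G[D]` has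
maximum independence number; and subject to that, `G[D]` has fewest edges. -/
def IsOptimalDomSet {V : Type*} (G : SimpleGraph V) (D : Set V) : Prop :=
  IsDomSet G D ∧ D.ncard = gamma G ∧
  (∀ D' : Set V, IsDomSet G D' → D'.ncard = gamma G → alphaOn G D' ≤ alphaOn G D) ∧
  (∀ D' : Set V, IsDomSet G D' → D'.ncard = gamma G →
    alphaOn G D' = alphaOn G D → edgeCountOn G D ≤ edgeCountOn G D')

/-- `w` is a private neighbor of `v` with respect to `D`: `w ∉ D` and `N(w) ∩ D = {v}`. -/
def IsPrivateNbr {V : Type*} (G : SimpleGraph V) (D : Set V) (v w : V) : Prop :=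
  w ∉ D ∧ G.Adj v w ∧ ∀ u ∈ D, G.Adj u w → u = v

/-- `R` is a partial independent set of representatives (partial ISR) for the family `P`:
an independent set consisting of distinct representatives of some subfamily of `P`. -/
def IsPartialISR {V : Type*} (G : SimpleGraph V) {n : ℕ} (P : Fin n → Set V)
    (R : Set V) : Prop :=
  IsIndep G R ∧ ∃ (J : Set (Fin n)) (x : Fin n → V),
    Set.InjOn x J ∧ (∀ j ∈ J, x j ∈ P j) ∧ R = x '' J

/-- `b(G)`: the largest number of vertices of an induced bipartite subgraph of `G`. -/
noncomputable def bipNum {V : Type*} (G : SimpleGraph V) : ℕ :=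
  sSup {n | ∃ B A : Set V, A ⊆ B ∧ IsIndep G A ∧ IsIndep G (B \ A) ∧ B.ncard = n}


/-!
Pad `G` with `r = k - γ(G)` disjoint copies of `K₂`; the padded graph has domination number `k`.
Over a disjoint union `γ` is additive, `α` is subadditive and `γ⁻¹` is superadditive, the last
because a minimum dominating set of the union restricts to minimum dominating sets of the parts.
Each copy of `K₂` contributes `1` to `γ`, at most `1` to `α` and at least `1` to `γ⁻¹`, so the
hypothesis for the padded graph gives `γ⁻¹(G) + r ≤ α(G) + r`.
-/

open SimpleGraph

theorem Set.ncard_eq_ncard_preimage_inl_add_ncard_preimage_inr {α β : Type*} {s : Set (α ⊕ β)}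
    (hs : s.Finite) : s.ncard = (Sum.inl ⁻¹' s).ncard + (Sum.inr ⁻¹' s).ncard := by
  conv_lhs => rw [← Set.image_preimage_inl_union_image_preimage_inr s]
  rw [Set.ncard_union_eq Set.disjoint_image_inl_image_inr
      ((hs.preimage Sum.inl_injective.injOn).image _)
      ((hs.preimage Sum.inr_injective.injOn).image _),
    Set.ncard_image_of_injective _ Sum.inl_injective,
    Set.ncard_image_of_injective _ Sum.inr_injective]

section Basic

variable {V : Type*} {G : SimpleGraph V}

theorem gamma_le_ncard {D : Set V} (hD : IsDomSet G D) : gamma G ≤ D.ncard :=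
  Nat.sInf_le ⟨D, hD, rfl⟩

theorem invGamma_le_ncard {D T : Set V} (hD : IsDomSet G D) (hDγ : D.ncard = gamma G)
    (hT : IsDomSet G T) (hDT : D ∩ T = ∅) : invGamma G ≤ T.ncard :=
  Nat.sInf_le ⟨D, T, hD, hDγ, hT, hDT, rfl⟩

theorem exists_isDomSet_ncard_eq_gamma (G : SimpleGraph V) :
    ∃ D : Set V, IsDomSet G D ∧ D.ncard = gamma G :=
  Nat.sInf_mem (s := {n | ∃ D : Set V, IsDomSet G D ∧ D.ncard = n})
    ⟨_, Set.univ, fun _ => Or.inl trivial, rfl⟩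

theorem alpha_le {n : ℕ} (h : ∀ S : Set V, IsIndep G S → S.ncard ≤ n) : alpha G ≤ n :=
  csSup_le' fun _ ⟨S, hS, hSn⟩ => hSn ▸ h S hS

theorem IsDomSet.diff_singleton {D : Set V} {v : V} (hD : IsDomSet G D) (hv : ∃ u, G.Adj v u)
    (hN : ∀ u, G.Adj v u → u ∈ D) : IsDomSet G (D \ {v}) := by
  intro w
  rcases hD w with hw | ⟨u, hu, huw⟩
  · by_cases hwv : w = v
    · subst hwv
      obtain ⟨u, hwu⟩ := hv
      exact Or.inr ⟨u, ⟨hN u hwu, hwu.ne.symm⟩, hwu.symm⟩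
    · exact Or.inl ⟨hw, hwv⟩
  · by_cases huv : u = v
    · subst huv
      exact Or.inl ⟨hN w huw, huw.ne.symm⟩
    · exact Or.inr ⟨u, ⟨hu, huv⟩, huw⟩

variable [Finite V]

theorem ncard_le_alpha {S : Set V} (hS : IsIndep G S) : S.ncard ≤ alpha G := by
  refine le_csSup ⟨Nat.card V, ?_⟩ ⟨S, hS, rfl⟩
  rintro _ ⟨S, -, rfl⟩
  exact Set.ncard_le_card S

/-- A vertex of `D` without neighbours outside `D` could be removed from `D`. -/
theorem IsDomSet.compl_of_ncard_eq_gamma (hG : ∀ v : V, ∃ u, G.Adj v u) {D : Set V}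
    (hD : IsDomSet G D) (hDγ : D.ncard = gamma G) : IsDomSet G Dᶜ := by
  intro v
  by_cases hv : v ∈ D
  · by_contra! hcon
    have hN : ∀ u, G.Adj v u → u ∈ D := fun u hvu => by
      by_contra hu
      exact hcon.2 u hu hvu.symm
    have hsmall := Set.ncard_sdiff_singleton_lt_of_mem hv (Set.toFinite D)
    have := gamma_le_ncard (hD.diff_singleton (hG v) hN)
    omega
  · exact Or.inl hv

theorem exists_isDomSet_ncard_eq_invGamma (hG : ∀ v : V, ∃ u, G.Adj v u) :
    ∃ D T : Set V, IsDomSet G D ∧ D.ncard = gamma G ∧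
      IsDomSet G T ∧ D ∩ T = ∅ ∧ T.ncard = invGamma G := by
  obtain ⟨D, hD, hDγ⟩ := exists_isDomSet_ncard_eq_gamma G
  exact Nat.sInf_mem (s := {n | ∃ D T : Set V, IsDomSet G D ∧ D.ncard = gamma G ∧
    IsDomSet G T ∧ D ∩ T = ∅ ∧ T.ncard = n})
    ⟨_, D, Dᶜ, hD, hDγ, hD.compl_of_ncard_eq_gamma hG hDγ, Set.inter_compl_self D, rfl⟩

theorem gamma_le_invGamma (hG : ∀ v : V, ∃ u, G.Adj v u) : gamma G ≤ invGamma G := by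
  obtain ⟨-, T, -, -, hT, -, hTc⟩ := exists_isDomSet_ncard_eq_invGamma hG
  exact hTc ▸ gamma_le_ncard hT

end Basic

section DisjointSum

variable {V W : Type*} {G : SimpleGraph V} {H : SimpleGraph W}

theorem exists_adj_sum (hG : ∀ v : V, ∃ u, G.Adj v u) (hH : ∀ w : W, ∃ u, H.Adj w u) :
    ∀ x : V ⊕ W, ∃ y, (G ⊕g H).Adj x y
  | .inl v => let ⟨u, hu⟩ := hG v; ⟨.inl u, hu⟩
  | .inr w => let ⟨u, hu⟩ := hH w; ⟨.inr u, hu⟩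

theorem IsDomSet.preimage_inl {D : Set (V ⊕ W)} (hD : IsDomSet (G ⊕g H) D) :
    IsDomSet G (Sum.inl ⁻¹' D) := fun v => by
  rcases hD (.inl v) with hv | ⟨u | u, hu, huv⟩
  · exact Or.inl hv
  · exact Or.inr ⟨u, hu, huv⟩
  · exact (not_adj_sum_inl_inr v u huv.symm).elim

theorem IsDomSet.preimage_inr {D : Set (V ⊕ W)} (hD : IsDomSet (G ⊕g H) D) :
    IsDomSet H (Sum.inr ⁻¹' D) := fun w => by
  rcases hD (.inr w) with hw | ⟨u | u, hu, huw⟩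
  · exact Or.inl hw
  · exact (not_adj_sum_inl_inr u w huw).elim
  · exact Or.inr ⟨u, hu, huw⟩

theorem IsDomSet.sum {D : Set V} {E : Set W} (hD : IsDomSet G D) (hE : IsDomSet H E) :
    IsDomSet (G ⊕g H) (Sum.inl '' D ∪ Sum.inr '' E)
  | .inl v => (hD v).imp (fun hv => .inl ⟨v, hv, rfl⟩)
      fun ⟨u, hu, huv⟩ => ⟨.inl u, .inl ⟨u, hu, rfl⟩, huv⟩
  | .inr w => (hE w).imp (fun hw => .inr ⟨w, hw, rfl⟩)
      fun ⟨u, hu, huw⟩ => ⟨.inr u, .inr ⟨u, hu, rfl⟩, huw⟩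

theorem IsIndep.preimage_inl {S : Set (V ⊕ W)} (hS : IsIndep (G ⊕g H) S) :
    IsIndep G (Sum.inl ⁻¹' S) := fun _ hu _ hv huv => hS hu hv (Sum.inl_injective.ne huv)

theorem IsIndep.preimage_inr {S : Set (V ⊕ W)} (hS : IsIndep (G ⊕g H) S) :
    IsIndep H (Sum.inr ⁻¹' S) := fun _ hu _ hv huv => hS hu hv (Sum.inr_injective.ne huv)

variable [Finite V] [Finite W]

theorem gamma_sum : gamma (G ⊕g H) = gamma G + gamma H := by
  apply le_antisymm
  · obtain ⟨D, hD, hDγ⟩ := exists_isDomSet_ncard_eq_gamma G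
    obtain ⟨E, hE, hEγ⟩ := exists_isDomSet_ncard_eq_gamma H
    calc gamma (G ⊕g H) ≤ (Sum.inl '' D ∪ Sum.inr '' E).ncard := gamma_le_ncard (hD.sum hE)
      _ = gamma G + gamma H := by
        rw [Set.ncard_eq_ncard_preimage_inl_add_ncard_preimage_inr (Set.toFinite _)]
        simp [Set.preimage_image_eq _ Sum.inl_injective,
          Set.preimage_image_eq _ Sum.inr_injective, hDγ, hEγ]
  · obtain ⟨D, hD, hDγ⟩ := exists_isDomSet_ncard_eq_gamma (G ⊕g H)
    rw [← hDγ, Set.ncard_eq_ncard_preimage_inl_add_ncard_preimage_inr (Set.toFinite D)]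
    exact add_le_add (gamma_le_ncard hD.preimage_inl) (gamma_le_ncard hD.preimage_inr)

theorem alpha_sum_le : alpha (G ⊕g H) ≤ alpha G + alpha H :=
  alpha_le fun S hS => by
    rw [Set.ncard_eq_ncard_preimage_inl_add_ncard_preimage_inr (Set.toFinite S)]
    exact add_le_add (ncard_le_alpha hS.preimage_inl) (ncard_le_alpha hS.preimage_inr)

theorem invGamma_add_invGamma_le_invGamma_sum (hG : ∀ v : V, ∃ u, G.Adj v u)
    (hH : ∀ w : W, ∃ u, H.Adj w u) : invGamma G + invGamma H ≤ invGamma (G ⊕g H) := by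
  obtain ⟨D, T, hD, hDγ, hT, hDT, hTc⟩ :=
    exists_isDomSet_ncard_eq_invGamma (exists_adj_sum hG hH)
  rw [gamma_sum, Set.ncard_eq_ncard_preimage_inl_add_ncard_preimage_inr (Set.toFinite D)] at hDγ
  have hDG := gamma_le_ncard hD.preimage_inl
  have hDH := gamma_le_ncard hD.preimage_inr
  have hDT_inl : Sum.inl ⁻¹' D ∩ Sum.inl ⁻¹' T = ∅ := by rw [← Set.preimage_inter, hDT]; rfl
  have hDT_inr : Sum.inr ⁻¹' D ∩ Sum.inr ⁻¹' T = ∅ := by rw [← Set.preimage_inter, hDT]; rfl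
  rw [← hTc, Set.ncard_eq_ncard_preimage_inl_add_ncard_preimage_inr (Set.toFinite T)]
  exact add_le_add (invGamma_le_ncard hD.preimage_inl (by omega) hT.preimage_inl hDT_inl)
    (invGamma_le_ncard hD.preimage_inr (by omega) hT.preimage_inr hDT_inr)

end DisjointSum

section Matching

/-- `|ι|` disjoint copies of `K₂`. -/
abbrev matchingGraph (ι : Type*) : SimpleGraph (ι × Bool) := (⊥ : SimpleGraph ι) □ ⊤

variable {ι : Type*}

@[simp]
theorem matchingGraph_adj {x y : ι × Bool} :
    (matchingGraph ι).Adj x y ↔ x.1 = y.1 ∧ x.2 ≠ y.2 := by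
  simp [boxProd_adj, and_comm]

theorem exists_adj_matchingGraph (x : ι × Bool) : ∃ y, (matchingGraph ι).Adj x y :=
  ⟨(x.1, !x.2), by simp⟩

theorem IsDomSet.image_fst_eq_univ {D : Set (ι × Bool)} (hD : IsDomSet (matchingGraph ι) D) :
    Prod.fst '' D = Set.univ :=
  Set.eq_univ_of_forall fun i => by
    rcases hD (i, true) with h | ⟨u, hu, hui⟩
    exacts [⟨_, h, rfl⟩, ⟨u, hu, (matchingGraph_adj.1 hui).1⟩]

variable [Finite ι]

theorem gamma_matchingGraph : gamma (matchingGraph ι) = Nat.card ι := by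
  apply le_antisymm
  · have hdom : IsDomSet (matchingGraph ι) (Set.univ ×ˢ {true}) := fun
      | (i, true) => Or.inl (by simp)
      | (i, false) => Or.inr ⟨(i, true), by simp⟩
    have := Fintype.ofFinite ι
    refine (gamma_le_ncard hdom).trans_eq ?_
    rw [Set.ncard_prod, Set.ncard_univ, Set.ncard_singleton, mul_one]
  · obtain ⟨D, hD, hDγ⟩ := exists_isDomSet_ncard_eq_gamma (matchingGraph ι)
    calc Nat.card ι = (Prod.fst '' D).ncard := by rw [hD.image_fst_eq_univ, Set.ncard_univ]
      _ ≤ D.ncard := Set.ncard_image_le (Set.toFinite D)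
      _ = gamma (matchingGraph ι) := hDγ

theorem alpha_matchingGraph_le : alpha (matchingGraph ι) ≤ Nat.card ι :=
  alpha_le fun S hS => by
    have hinj : Set.InjOn Prod.fst S := fun x hx y hy hxy => by
      by_contra hne
      exact hS hx hy hne (matchingGraph_adj.2 ⟨hxy, fun h => hne (Prod.ext hxy h)⟩)
    rw [← hinj.ncard_image]
    exact Set.ncard_le_card _

end Matching

theorem inverse_domination_downward_closed_general (k : ℕ)
    (h : ∀ (W : Type) [Fintype W] (H : SimpleGraph W),
      (∀ v : W, ∃ u, H.Adj v u) → gamma H = k → invGamma H ≤ alpha H) :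
    ∀ (V : Type) [Fintype V] (G : SimpleGraph V),
      (∀ v : V, ∃ u, G.Adj v u) → gamma G ≤ k → invGamma G ≤ alpha G := by
  intro V _ G hG hγG
  set r := k - gamma G
  let M := matchingGraph (Fin r)
  have hM : ∀ x, ∃ y, M.Adj x y := exists_adj_matchingGraph
  have hγM : gamma M = r := by simp [M, gamma_matchingGraph]
  have hαM : alpha M ≤ r := by simpa using alpha_matchingGraph_le (ι := Fin r)
  have hγ : gamma (G ⊕g M) = k := by rw [gamma_sum, hγM]; omega
  refine Nat.le_of_add_le_add_right (b := r) ?_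
  calc invGamma G + r
      ≤ invGamma G + invGamma M := by grw [← gamma_le_invGamma hM, hγM]
    _ ≤ invGamma (G ⊕g M) := invGamma_add_invGamma_le_invGamma_sum hG hM
    _ ≤ alpha (G ⊕g M) := h _ _ (exists_adj_sum hG hM) hγ
    _ ≤ alpha G + alpha M := alpha_sum_le
    _ ≤ alpha G + r := by grw [hαM]

theorem inverse_domination_downward_closed (k : ℕ) (hk : 0 < k)
    (h : ∀ (W : Type) [Fintype W] (H : SimpleGraph W),
      (∀ v : W, ∃ u, H.Adj v u) → gamma H = k → invGamma H ≤ alpha H) :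
    ∀ (V : Type) [Fintype V] (G : SimpleGraph V),
      (∀ v : V, ∃ u, G.Adj v u) → gamma G ≤ k → invGamma G ≤ alpha G :=
  inverse_domination_downward_closed_general k h
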